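/- For any heterogeneous graph G and typed graphlet H, the typed-graphlet conductance of G based on H is bounded by the ordinary conductance of the weighted graph G^H via (1/|E(H)|) · φ(G^H) ≤ φ^H(G) ≤ φ(G^H). -/
import Mathlib


open scoped Classical BigOperators

/-- A (typed-graphlet) instance: a finite set of vertices and edges. -/
structure Inst (V : Type*) where
  verts : Finset V
  edges : Finset (Sym2 V)

variable {V : Type*} [Fintype V] [DecidableEq V]

/-- Typed-graphlet edge weight: number of instances containing `e` as an edge. -/
noncomputable def W (I : Finset (Inst V)) (e : Sym2 V) : ℕ :=
  (I.filter fun F => e ∈ F.edges).card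

/-- Typed-graphlet degree of `v`. -/
noncomputable def degH (I : Finset (Inst V)) (v : V) : ℕ :=
  ∑ F ∈ I, (F.edges.filter fun e => v ∈ e).card

/-- Typed-graphlet volume of `S`. -/
noncomputable def volH (I : Finset (Inst V)) (S : Finset V) : ℕ :=
  ∑ v ∈ S, degH I v

/-- Weighted degree of `v` in the induced weighted graph `G^H`. -/
noncomputable def wdeg (I : Finset (Inst V)) (v : V) : ℕ :=
  ∑ e ∈ Finset.univ.filter (fun e : Sym2 V => v ∈ e), W I e

/-- Weighted volume of `S` in `G^H`. -/
noncomputable def volW (I : Finset (Inst V)) (S : Finset V) : ℕ :=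
  ∑ v ∈ S, wdeg I v

/-- An edge crosses the cut `(S, Sᶜ)`. -/
def cross (S : Finset V) (e : Sym2 V) : Prop :=
  (∃ x ∈ e, x ∈ S) ∧ (∃ x ∈ e, x ∉ S)

/-- Weighted cut size in `G^H`. -/
noncomputable def cutW (I : Finset (Inst V)) (S : Finset V) : ℕ :=
  ∑ e ∈ Finset.univ.filter (fun e : Sym2 V => cross S e), W I e

/-- An instance crosses the cut `(S, Sᶜ)`. -/
def crossInst (S : Finset V) (F : Inst V) : Prop :=
  (∃ v ∈ F.verts, v ∈ S) ∧ (∃ v ∈ F.verts, v ∉ S)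

/-- Typed-graphlet cut size: number of instances crossing the cut. -/
noncomputable def cutH (I : Finset (Inst V)) (S : Finset V) : ℕ :=
  (I.filter fun F => crossInst S F).card

/-- Connectedness of an instance (vertices nonempty, edges within vertex set,
every two vertices joined by a path of instance edges). -/
def connectedInst (F : Inst V) : Prop :=
  F.verts.Nonempty ∧ (∀ e ∈ F.edges, ∀ x ∈ e, x ∈ F.verts) ∧
    ∀ a ∈ F.verts, ∀ b ∈ F.verts,
      Relation.ReflTransGen (fun x y => s(x, y) ∈ F.edges) a b

/-- Typed-graphlet conductance of the cut `(S, Sᶜ)`. -/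
noncomputable def phiHcut (I : Finset (Inst V)) (S : Finset V) : ℝ :=
  (cutH I S : ℝ) / min (volH I S : ℝ) (volH I Sᶜ : ℝ)

/-- Ordinary weighted conductance of the cut `(S, Sᶜ)` in `G^H`. -/
noncomputable def phiWcut (I : Finset (Inst V)) (S : Finset V) : ℝ :=
  (cutW I S : ℝ) / min (volW I S : ℝ) (volW I Sᶜ : ℝ)

/-- Typed-graphlet conductance of `G`: minimum over all proper nonempty cuts. -/
noncomputable def phiH (I : Finset (Inst V)) : ℝ :=
  sInf {q : ℝ | ∃ S : Finset V, S.Nonempty ∧ Sᶜ.Nonempty ∧ q = phiHcut I S}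

/-- Ordinary conductance of the weighted graph `G^H`. -/
noncomputable def phiW (I : Finset (Inst V)) : ℝ :=
  sInf {q : ℝ | ∃ S : Finset V, S.Nonempty ∧ Sᶜ.Nonempty ∧ q = phiWcut I S}

/- ===== auxiliary lemmas ===== -/

private lemma sum_W_eq (I : Finset (Inst V)) (p : Sym2 V → Prop) :
    ∑ e ∈ Finset.univ.filter (fun e : Sym2 V => p e), W I e
      = ∑ F ∈ I, (F.edges.filter fun e => p e).card := by
  unfold W
  simp_rw [Finset.card_filter]
  rw [Finset.sum_comm]
  refine Finset.sum_congr rfl fun F _ => ?_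
  calc ∑ e ∈ Finset.univ.filter (fun e : Sym2 V => p e),
          (if e ∈ F.edges then 1 else 0)
      = ((Finset.univ.filter fun e : Sym2 V => p e).filter
          (fun e => e ∈ F.edges)).card := (Finset.card_filter _ _).symm
    _ = (F.edges.filter fun e => p e).card := by
        congr 1
        ext e
        simp [and_comm]
    _ = ∑ e ∈ F.edges, (if p e then 1 else 0) := Finset.card_filter _ _

private lemma wdeg_eq_degH (I : Finset (Inst V)) (v : V) :
    wdeg I v = degH I v := by
  unfold wdeg degH W
  simp_rw [Finset.card_filter]
  rw [Finset.sum_comm]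
  refine Finset.sum_congr rfl fun F _ => ?_
  calc ∑ e ∈ Finset.univ.filter (fun e : Sym2 V => v ∈ e),
          (if e ∈ F.edges then 1 else 0)
      = ((Finset.univ.filter fun e : Sym2 V => v ∈ e).filter
          (fun e => e ∈ F.edges)).card := (Finset.card_filter _ _).symm
    _ = (F.edges.filter fun e => v ∈ e).card := by
        congr 1
        ext e
        simp [and_comm]
    _ = ∑ e ∈ F.edges, (if v ∈ e then 1 else 0) := Finset.card_filter _ _

private lemma volW_eq_volH (I : Finset (Inst V)) (S : Finset V) :
    volW I S = volH I S :=
  Finset.sum_congr rfl fun v _ => wdeg_eq_degH I v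

private lemma cutW_eq_sum (I : Finset (Inst V)) (S : Finset V) :
    cutW I S = ∑ F ∈ I, (F.edges.filter fun e => cross S e).card :=
  sum_W_eq I (cross S)

private lemma exists_step {r : V → V → Prop} {S : Finset V} {a b : V}
    (h : Relation.ReflTransGen r a b) (ha : a ∈ S) (hb : b ∉ S) :
    ∃ x y, r x y ∧ x ∈ S ∧ y ∉ S := by
  revert hb
  induction h with
  | refl => exact fun hb => absurd ha hb
  | @tail c d h' step ih =>
    intro hd
    by_cases hc : c ∈ S
    · exact ⟨c, d, step, hc, hd⟩
    · exact ih hc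

private lemma exists_cross_edge {S : Finset V} {F : Inst V}
    (hc : connectedInst F) (h : crossInst S F) :
    ∃ e ∈ F.edges, cross S e := by
  obtain ⟨⟨a, ha, haS⟩, ⟨b, hb, hbS⟩⟩ := h
  obtain ⟨x, y, hxy, hxS, hyS⟩ := exists_step (hc.2.2 a ha b hb) haS hbS
  exact ⟨s(x, y), hxy, ⟨x, by simp, hxS⟩, ⟨y, by simp, hyS⟩⟩

private lemma no_cross_edge {S : Finset V} {F : Inst V}
    (hc : connectedInst F) (h : ¬ crossInst S F) :
    ∀ e ∈ F.edges, ¬ cross S e := by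
  intro e he hcr
  obtain ⟨⟨x, hx, hxS⟩, ⟨y, hy, hyS⟩⟩ := hcr
  exact h ⟨⟨x, hc.2.1 e he x hx, hxS⟩, ⟨y, hc.2.1 e he y hy, hyS⟩⟩

private lemma cutH_le_cutW (I : Finset (Inst V)) (S : Finset V)
    (hconn : ∀ F ∈ I, connectedInst F) :
    cutH I S ≤ cutW I S := by
  rw [cutW_eq_sum]
  unfold cutH
  calc (I.filter fun F => crossInst S F).card
      = ∑ _F ∈ I.filter (fun F => crossInst S F), 1 := by
        rw [Finset.sum_const, smul_eq_mul, mul_one]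
    _ ≤ ∑ F ∈ I.filter (fun F => crossInst S F),
          (F.edges.filter fun e => cross S e).card := by
        refine Finset.sum_le_sum fun F hF => ?_
        obtain ⟨hFI, hcr⟩ := Finset.mem_filter.mp hF
        obtain ⟨e, he, hce⟩ := exists_cross_edge (hconn F hFI) hcr
        exact Finset.card_pos.mpr ⟨e, Finset.mem_filter.mpr ⟨he, hce⟩⟩
    _ ≤ ∑ F ∈ I, (F.edges.filter fun e => cross S e).card :=
        Finset.sum_le_sum_of_subset (Finset.filter_subset _ _)

private lemma cutW_le_m_mul_cutH (I : Finset (Inst V)) (S : Finset V) (m : ℕ)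
    (hcard : ∀ F ∈ I, F.edges.card = m)
    (hconn : ∀ F ∈ I, connectedInst F) :
    cutW I S ≤ m * cutH I S := by
  rw [cutW_eq_sum]
  have hzero : ∀ F ∈ I, ¬ crossInst S F →
      (F.edges.filter fun e => cross S e).card = 0 := by
    intro F hF hncr
    rw [Finset.card_eq_zero, Finset.filter_eq_empty_iff]
    exact fun {e} he => no_cross_edge (hconn F hF) hncr e he
  calc ∑ F ∈ I, (F.edges.filter fun e => cross S e).card
      = ∑ F ∈ I.filter (fun F => crossInst S F),
          (F.edges.filter fun e => cross S e).card := by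
        rw [Finset.sum_filter]
        refine Finset.sum_congr rfl fun F hF => ?_
        by_cases h : crossInst S F
        · simp [h]
        · simp [h, hzero F hF h]
    _ ≤ ∑ _F ∈ I.filter (fun F => crossInst S F), m := by
        refine Finset.sum_le_sum fun F hF => ?_
        obtain ⟨hFI, _⟩ := Finset.mem_filter.mp hF
        calc (F.edges.filter fun e => cross S e).card
            ≤ F.edges.card := Finset.card_filter_le _ _
          _ = m := hcard F hFI
    _ = m * cutH I S := by
        rw [Finset.sum_const, smul_eq_mul, mul_comm]
        rfl

/-- sandwich inequality between the typed-graphlet conductance of `G`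
and the ordinary conductance of the weighted graph `G^H`. -/
theorem conductance_sandwich [Nontrivial V]
    (I : Finset (Inst V)) (m : ℕ) (hm : 0 < m)
    (hcard : ∀ F ∈ I, F.edges.card = m)
    (hconn : ∀ F ∈ I, connectedInst F)
    (hvol : ∀ S : Finset V, S.Nonempty → Sᶜ.Nonempty → 0 < volH I S) :
    (1 / (m : ℝ)) * phiW I ≤ phiH I ∧ phiH I ≤ phiW I := by
  have hm0 : (m : ℝ) ≠ 0 := Nat.cast_ne_zero.mpr hm.ne'
  have hminv : (0 : ℝ) ≤ 1 / m := by positivity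
  -- positivity of denominators and pointwise comparisons
  have hd : ∀ S : Finset V, S.Nonempty → Sᶜ.Nonempty →
      (0 : ℝ) < min (volH I S : ℝ) (volH I Sᶜ : ℝ) := by
    intro S hS hSc
    have h1 : 0 < volH I S := hvol S hS hSc
    have h2 : 0 < volH I Sᶜ := hvol Sᶜ hSc (by simpa using hS)
    exact lt_min_iff.mpr ⟨by exact_mod_cast h1, by exact_mod_cast h2⟩
  have hWcut : ∀ S : Finset V, phiWcut I S =
      (cutW I S : ℝ) / min (volH I S : ℝ) (volH I Sᶜ : ℝ) := by
    intro S
    unfold phiWcut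
    rw [volW_eq_volH, volW_eq_volH]
  have hle : ∀ S : Finset V, S.Nonempty → Sᶜ.Nonempty →
      phiHcut I S ≤ phiWcut I S := by
    intro S hS hSc
    rw [hWcut]
    unfold phiHcut
    have := cutH_le_cutW I S hconn
    gcongr
  have hge : ∀ S : Finset V, S.Nonempty → Sᶜ.Nonempty →
      (1 / (m : ℝ)) * phiWcut I S ≤ phiHcut I S := by
    intro S hS hSc
    rw [hWcut]
    unfold phiHcut
    set d : ℝ := min (volH I S : ℝ) (volH I Sᶜ : ℝ) with hdef
    have hdpos := hd S hS hSc
    have hc : (cutW I S : ℝ) ≤ (m : ℝ) * cutH I S := by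
      exact_mod_cast cutW_le_m_mul_cutH I S m hcard hconn
    calc (1 / (m : ℝ)) * ((cutW I S : ℝ) / d)
        ≤ (1 / (m : ℝ)) * (((m : ℝ) * cutH I S) / d) := by gcongr
      _ = (cutH I S : ℝ) / d := by
          field_simp
  -- the two sets are nonempty and bounded below
  obtain ⟨x, y, hxy⟩ := exists_pair_ne V
  have hSx : ({x} : Finset V).Nonempty := Finset.singleton_nonempty x
  have hSxc : ({x} : Finset V)ᶜ.Nonempty :=
    ⟨y, Finset.mem_compl.mpr (by simp [hxy.symm])⟩
  have hAne : {q : ℝ | ∃ S : Finset V, S.Nonempty ∧ Sᶜ.Nonempty ∧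
      q = phiHcut I S}.Nonempty := ⟨phiHcut I {x}, {x}, hSx, hSxc, rfl⟩
  have hBne : {q : ℝ | ∃ S : Finset V, S.Nonempty ∧ Sᶜ.Nonempty ∧
      q = phiWcut I S}.Nonempty := ⟨phiWcut I {x}, {x}, hSx, hSxc, rfl⟩
  have hAbdd : BddBelow {q : ℝ | ∃ S : Finset V, S.Nonempty ∧ Sᶜ.Nonempty ∧
      q = phiHcut I S} := by
    refine ⟨0, fun q hq => ?_⟩
    obtain ⟨S, _, _, rfl⟩ := hq
    unfold phiHcut
    positivity
  have hBbdd : BddBelow {q : ℝ | ∃ S : Finset V, S.Nonempty ∧ Sᶜ.Nonempty ∧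
      q = phiWcut I S} := by
    refine ⟨0, fun q hq => ?_⟩
    obtain ⟨S, _, _, rfl⟩ := hq
    unfold phiWcut
    positivity
  constructor
  · -- (1/m) * phiW ≤ phiH
    unfold phiH phiW
    refine le_csInf hAne ?_
    rintro q ⟨S, hS, hSc, rfl⟩
    have h1 : sInf {q : ℝ | ∃ S : Finset V, S.Nonempty ∧ Sᶜ.Nonempty ∧
        q = phiWcut I S} ≤ phiWcut I S := csInf_le hBbdd ⟨S, hS, hSc, rfl⟩
    calc (1 / (m : ℝ)) * sInf {q : ℝ | ∃ S : Finset V, S.Nonempty ∧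
          Sᶜ.Nonempty ∧ q = phiWcut I S}
        ≤ (1 / (m : ℝ)) * phiWcut I S := by gcongr
      _ ≤ phiHcut I S := hge S hS hSc
  · -- phiH ≤ phiW
    unfold phiH phiW
    refine le_csInf hBne ?_
    rintro q ⟨S, hS, hSc, rfl⟩
    calc sInf {q : ℝ | ∃ S : Finset V, S.Nonempty ∧ Sᶜ.Nonempty ∧
          q = phiHcut I S}
        ≤ phiHcut I S := csInf_le hAbdd ⟨S, hS, hSc, rfl⟩
      _ ≤ phiWcut I S := hle S hS hSc
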